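/- Work in ℤ[x,y,z,u,t]. Let φ(x,y,z,u,t) = (x·z·t², x·u·y·(t−y), u·y²·(t−y), u·y·(t−y)·z, u·y·(t−y)·t) and let φ² = φ∘φ, a 5-tuple of homogeneous polynomials of degree 16. Then the greatest common divisor of the five components of φ²(x,y,z,u,t) is a homogeneous polynomial of degree 11; equivalently, after dividing out this gcd the reduced second iterate consists of five coprime homogeneous polynomials of degree 5. -/

import Mathlib

open MvPolynomial

/-- Abbreviation for `ℤ[x,y,z,u,t]` with variables `x = X 0`, `y = X 1`, `z = X 2`,
`u = X 3`, `t = X 4`. -/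
abbrev P4R := MvPolynomial (Fin 5) ℤ

/-- The homogeneous degree-4 representative of the birational self-map of `P⁴`:
`φ(x,y,z,u,t) = (x·z·t², x·u·y·(t−y), u·y²·(t−y), u·y·(t−y)·z, u·y·(t−y)·t)`. -/
noncomputable def phiP4 (p : P4R × P4R × P4R × P4R × P4R) :
    P4R × P4R × P4R × P4R × P4R :=
  (p.1 * p.2.2.1 * p.2.2.2.2 ^ 2,
   p.1 * p.2.2.2.1 * p.2.1 * (p.2.2.2.2 - p.2.1),
   p.2.2.2.1 * p.2.1 ^ 2 * (p.2.2.2.2 - p.2.1),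
   p.2.2.2.1 * p.2.1 * (p.2.2.2.2 - p.2.1) * p.2.2.1,
   p.2.2.2.1 * p.2.1 * (p.2.2.2.2 - p.2.1) * p.2.2.2.2)

/-!
With `w = u·y·(t−y)`, every component of `φ²` is `g·qᵢ`, where `g = x·z·w³` has degree 11 and
`q = (y·t⁴, x·z·t²·(t−x), x·(t−x)·w, y·(t−x)·w, t·(t−x)·w)`. Already `q₀, q₁, q₂` are coprime:
a common factor splits into a factor of `y`, which would divide `q₁` (impossible, as `q₁` does not
vanish on `y = 0`), and a factor of `t⁴`, which would divide `q₂` (impossible, as `q₂` does not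
vanish on `t = 0`). In a UFD a common divisor of `g·q₀, g·q₁, g·q₂` then divides
`g·gcd(q₀, q₁, q₂)`, an associate of `g`.
-/

section Divisibility

variable {α : Type*}

theorem isUnit_of_dvd_mul_of_isRelPrime [CommMonoid α] [DecompositionMonoid α] {a b c d h : α}
    (hac : IsRelPrime a c) (hbd : IsRelPrime b d) (hab : h ∣ a * b) (hc : h ∣ c) (hd : h ∣ d) :
    IsUnit h := by
  obtain ⟨h₁, h₂, ha, hb, rfl⟩ := exists_dvd_and_dvd_of_dvd_mul hab
  exact (hac ha (dvd_of_mul_right_dvd hc)).mul (hbd hb (dvd_of_mul_left_dvd hd))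

theorem dvd_of_dvd_mul_of_forall_isUnit [CommMonoidWithZero α] [GCDMonoid α]
    {g a b c h : α} (habc : ∀ d, d ∣ a → d ∣ b → d ∣ c → IsUnit d)
    (ha : h ∣ g * a) (hb : h ∣ g * b) (hc : h ∣ g * c) : h ∣ g := by
  have hunit : IsUnit (gcd a (gcd b c)) :=
    habc _ (gcd_dvd_left _ _) ((gcd_dvd_right _ _).trans (gcd_dvd_left _ _))
      ((gcd_dvd_right _ _).trans (gcd_dvd_right _ _))
  have hbc : h ∣ g * gcd b c := (dvd_gcd hb hc).trans (gcd_mul_left' g b c).dvd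
  have hg : h ∣ g * gcd a (gcd b c) := (dvd_gcd ha hbc).trans (gcd_mul_left' g a _).dvd
  exact hg.trans (hunit.mul_right_dvd.mpr dvd_rfl)

end Divisibility

theorem MvPolynomial.eval_eq_zero_of_X_dvd {σ R : Type*} [CommSemiring R] {i : σ}
    {f : σ → R} {p : MvPolynomial σ R} (hf : f i = 0) (hp : X i ∣ p) : eval f p = 0 := by
  obtain ⟨r, rfl⟩ := hp
  simp [hf]

theorem MvPolynomial.isRelPrime_X_of_eval_ne_zero {σ R : Type*} [CommRing R] [IsDomain R]
    {i : σ} {p : MvPolynomial σ R} (f : σ → R) (hf : f i = 0) (hp : eval f p ≠ 0) :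
    IsRelPrime (X i) p :=
  X_prime.irreducible.isRelPrime_iff_not_dvd.mpr
    fun h ↦ hp (eval_eq_zero_of_X_dvd hf h)

/-- The gcd of the five components of the second compositional iterate `φ² = φ ∘ φ`
(a 5-tuple of homogeneous polynomials of degree 16) is a homogeneous polynomial of
degree 11; equivalently, after dividing out this gcd the reduced second iterate consists
of five coprime homogeneous polynomials of degree 5. -/
theorem phiP4_second_iterate_gcd :
    ∃ g q₀ q₁ q₂ q₃ q₄ : P4R,
      g.IsHomogeneous 11 ∧
      q₀.IsHomogeneous 5 ∧ q₁.IsHomogeneous 5 ∧ q₂.IsHomogeneous 5 ∧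
      q₃.IsHomogeneous 5 ∧ q₄.IsHomogeneous 5 ∧
      (phiP4 (phiP4 (X 0, X 1, X 2, X 3, X 4))).1 = g * q₀ ∧
      (phiP4 (phiP4 (X 0, X 1, X 2, X 3, X 4))).2.1 = g * q₁ ∧
      (phiP4 (phiP4 (X 0, X 1, X 2, X 3, X 4))).2.2.1 = g * q₂ ∧
      (phiP4 (phiP4 (X 0, X 1, X 2, X 3, X 4))).2.2.2.1 = g * q₃ ∧
      (phiP4 (phiP4 (X 0, X 1, X 2, X 3, X 4))).2.2.2.2 = g * q₄ ∧
      (∀ h : P4R,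
        h ∣ (phiP4 (phiP4 (X 0, X 1, X 2, X 3, X 4))).1 →
        h ∣ (phiP4 (phiP4 (X 0, X 1, X 2, X 3, X 4))).2.1 →
        h ∣ (phiP4 (phiP4 (X 0, X 1, X 2, X 3, X 4))).2.2.1 →
        h ∣ (phiP4 (phiP4 (X 0, X 1, X 2, X 3, X 4))).2.2.2.1 →
        h ∣ (phiP4 (phiP4 (X 0, X 1, X 2, X 3, X 4))).2.2.2.2 → h ∣ g) ∧
      (∀ h : P4R, h ∣ q₀ → h ∣ q₁ → h ∣ q₂ → h ∣ q₃ → h ∣ q₄ → IsUnit h) := by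
  let _ : GCDMonoid P4R := UniqueFactorizationMonoid.toGCDMonoid P4R
  set w : P4R := X 3 * X 1 * (X 4 - X 1)
  set g : P4R := X 0 * X 2 * w ^ 3
  set q₀ : P4R := X 1 * X 4 ^ 4
  set q₁ : P4R := X 0 * X 2 * X 4 ^ 2 * (X 4 - X 0)
  set q₂ : P4R := X 0 * (X 4 - X 0) * w
  set q₃ : P4R := X 1 * (X 4 - X 0) * w
  set q₄ : P4R := X 4 * (X 4 - X 0) * w
  have hφ : phiP4 (phiP4 (X 0, X 1, X 2, X 3, X 4)) =
      (g * q₀, g * q₁, g * q₂, g * q₃, g * q₄) := by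
    simp only [phiP4, Prod.mk.injEq]
    refine ⟨?_, ?_, ?_, ?_, ?_⟩ <;> ring
  have hcop : ∀ h : P4R, h ∣ q₀ → h ∣ q₁ → h ∣ q₂ → IsUnit h := fun h ↦
    isUnit_of_dvd_mul_of_isRelPrime
      (isRelPrime_X_of_eval_ne_zero ![1, 0, 1, 1, 2] rfl (by simp [q₁]))
      (isRelPrime_X_of_eval_ne_zero ![1, 1, 1, 1, 0] rfl (by simp [q₂, w])).pow_left
  have hX (i : Fin 5) : (X i : P4R).IsHomogeneous 1 := isHomogeneous_X ℤ i
  have hw : w.IsHomogeneous 3 := ((hX 3).mul (hX 1)).mul ((hX 4).sub (hX 1))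
  rw [hφ]
  exact ⟨g, q₀, q₁, q₂, q₃, q₄,
    ((hX 0).mul (hX 2)).mul (hw.pow 3), (hX 1).mul ((hX 4).pow 4),
    (((hX 0).mul (hX 2)).mul ((hX 4).pow 2)).mul ((hX 4).sub (hX 0)),
    ((hX 0).mul ((hX 4).sub (hX 0))).mul hw, ((hX 1).mul ((hX 4).sub (hX 0))).mul hw,
    ((hX 4).mul ((hX 4).sub (hX 0))).mul hw, rfl, rfl, rfl, rfl, rfl,
    fun _ d₀ d₁ d₂ _ _ ↦ dvd_of_dvd_mul_of_forall_isUnit hcop d₀ d₁ d₂,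
    fun h d₀ d₁ d₂ _ _ ↦ hcop h d₀ d₁ d₂⟩
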